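/- arXiv:1408.3746 — 2 statements merged into one kernel-verified Lean document; each statement's English description precedes it below -/
import Mathlib

section
/- For odd k and r > k, the second derivative at 0 of the function A_{r,k}^2 defined by A_{r,k}^2(x) = Q_{r-k-1}(x)^2 (1-x^2)/(2(2r-2k-1)) - Σ_{n=r-k}^{r-1} Q_n^{(n+k-r)}(x)^2 (n+1/2) is strictly positive; more precisely, it equals (k+1)!^2 (r-(k+1)/2) / (2^{2r-1} ((k+1)/2)!^2 (r-(k+1)/2)!^2). -/
noncomputable def Q (n : ℕ) : ℝ → ℝ := fun x => (1 - x^2)^n / (2^n * n.factorial)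

noncomputable def A2 (r k : ℕ) : ℝ → ℝ := fun x =>
  (Q (r-k-1) x)^2 * (1 - x^2) / (2 * (2*(r:ℝ) - 2*k - 1)) -
    ∑ n ∈ Finset.Icc (r-k) (r-1), (iteratedDeriv (n+k-r) (Q n) x)^2 * ((n:ℝ) + 1/2)

open Polynomial

noncomputable def Qp (n : ℕ) : ℝ[X] := C ((2^n * n.factorial : ℝ)⁻¹) * (1 - X^2)^n

noncomputable def PA (r k : ℕ) : ℝ[X] :=
  C (2 * (2*(r:ℝ) - 2*(k:ℝ) - 1))⁻¹ * ((Qp (r-k-1))^2 * (1 - X^2)) -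
    ∑ n ∈ Finset.Icc (r-k) (r-1), C ((n:ℝ) + 1/2) * (derivative^[n+k-r] (Qp n))^2

noncomputable def gq (n u : ℕ) : ℝ :=
  if u % 2 = 0 then (-1)^(u/2) * (n.choose (u/2) : ℝ) * (2^n * n.factorial : ℝ)⁻¹ else 0

noncomputable def bb (m n t : ℕ) : ℝ :=
  ((t + (n - m)).descFactorial (n - m) : ℝ) * gq n (t + (n - m))

noncomputable def T (m n : ℕ) : ℝ := ((n:ℝ)+1/2) * (2 * bb m n 0 * bb m n 2 + (bb m n 1)^2)

noncomputable def EE (m R : ℕ) : ℝ :=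
  (2*(2*(m:ℝ)-1))⁻¹ * (2 * gq (m-1) 0 * gq (m-1) 2 - gq (m-1) 0 ^ 2) - ∑ n ∈ Finset.Icc m R, T m n

lemma Qeval (n : ℕ) : Q n = fun x => (Qp n).eval x := by
  funext x; simp [Q, Qp, div_eq_inv_mul]

lemma iteratedDeriv_polyeval (m : ℕ) (p : ℝ[X]) :
    iteratedDeriv m (fun x => p.eval x) = fun x => (derivative^[m] p).eval x := by
  induction m generalizing p with
  | zero => simp
  | succ m ih =>
    rw [iteratedDeriv_succ']
    have : deriv (fun x => p.eval x) = fun x => (derivative p).eval x := by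
      funext x; exact Polynomial.deriv p
    rw [this, ih, Function.iterate_succ_apply]

lemma A2_eval (r k : ℕ) : A2 r k = fun x => (PA r k).eval x := by
  funext x
  simp only [A2, PA, Qeval, iteratedDeriv_polyeval, eval_sub, eval_mul, eval_pow, eval_C,
    eval_X, eval_one, eval_finset_sum]
  ring_nf
  congr 1
  exact Finset.sum_congr rfl fun n _ => by ring

lemma iteratedDeriv2_A2 (r k : ℕ) : iteratedDeriv 2 (A2 r k) 0 = 2 * (PA r k).coeff 2 := by
  rw [A2_eval, iteratedDeriv_polyeval]
  show (derivative^[2] (PA r k)).eval 0 = _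
  rw [← Polynomial.coeff_zero_eq_eval_zero, Polynomial.coeff_iterate_derivative]
  norm_num

lemma coeff2_mul (p q : ℝ[X]) :
    (p*q).coeff 2 = p.coeff 0 * q.coeff 2 + p.coeff 1 * q.coeff 1 + p.coeff 2 * q.coeff 0 := by
  rw [Polynomial.coeff_mul, Finset.Nat.sum_antidiagonal_eq_sum_range_succ_mk]
  rw [Finset.sum_range_succ, Finset.sum_range_succ, Finset.sum_range_succ, Finset.sum_range_zero]
  norm_num

lemma coeff1_mul (p q : ℝ[X]) :
    (p*q).coeff 1 = p.coeff 0 * q.coeff 1 + p.coeff 1 * q.coeff 0 := by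
  rw [Polynomial.coeff_mul, Finset.Nat.sum_antidiagonal_eq_sum_range_succ_mk]
  rw [Finset.sum_range_succ, Finset.sum_range_succ, Finset.sum_range_zero]
  norm_num

lemma coeff_one_sub_X_sq_pow (n t : ℕ) :
    ((1 - X^2 : ℝ[X])^n).coeff t =
      if t % 2 = 0 then (-1)^(t/2) * (n.choose (t/2) : ℝ) else 0 := by
  have h : (1 - X^2 : ℝ[X])^n = ∑ i ∈ Finset.range (n+1), C ((-1)^i * (n.choose i : ℝ)) * X^(2*i) := by
    rw [sub_eq_add_neg, add_comm, add_pow]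
    refine Finset.sum_congr rfl fun i _ => ?_
    rw [neg_pow, one_pow, pow_mul]
    simp only [map_mul, map_pow, map_neg, map_one, map_natCast]
    ring
  rw [h, Polynomial.finset_sum_coeff]
  simp only [Polynomial.coeff_C_mul, Polynomial.coeff_X_pow]
  rcases Nat.even_or_odd t with he | ho
  · obtain ⟨i, hi⟩ := he
    have ht : t % 2 = 0 := by omega
    have ht2 : t / 2 = i := by omega
    rw [if_pos ht, ht2]
    by_cases hin : i ≤ n
    · rw [Finset.sum_eq_single i]
      · rw [if_pos (by omega)]; ring
      · intro b _ hb; rw [if_neg (by omega)]; ring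
      · intro h'; exact absurd (Finset.mem_range.mpr (by omega)) h'
    · rw [Finset.sum_eq_zero, Nat.choose_eq_zero_of_lt (by omega)]
      · simp
      · intro b hb; simp at hb; rw [if_neg (by omega)]; ring
  · obtain ⟨i, hi⟩ := ho
    rw [if_neg (by omega), Finset.sum_eq_zero]
    intro b _; rw [if_neg (by omega)]; ring

lemma coeff_Qp (n u : ℕ) : (Qp n).coeff u = gq n u := by
  rw [Qp, Polynomial.coeff_C_mul, coeff_one_sub_X_sq_pow, gq]
  split <;> ring

lemma coeff2_PA (r k : ℕ) (hk : 1 ≤ k) (hrk : k < r) :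
    (PA r k).coeff 2 = EE (r-k) (r-1) := by
  have hgq1 : ∀ n, gq n 1 = 0 := fun n => by simp [gq]
  rw [PA, Polynomial.coeff_sub, Polynomial.coeff_C_mul, Polynomial.finset_sum_coeff]
  rw [coeff2_mul (Qp (r-k-1) ^ 2) (1 - X^2)]
  rw [pow_two, coeff2_mul, coeff1_mul, Polynomial.mul_coeff_zero]
  have c0 : (1 - X^2 : ℝ[X]).coeff 0 = 1 := by simp
  have c1 : (1 - X^2 : ℝ[X]).coeff 1 = 0 := by simp [Polynomial.coeff_one]
  have c2 : (1 - X^2 : ℝ[X]).coeff 2 = -1 := by simp [Polynomial.coeff_one]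
  simp only [coeff_Qp, c0, c1, c2, hgq1]
  rw [EE]
  have hcast : ((r - k : ℕ) : ℝ) = (r:ℝ) - k := by
    rw [Nat.cast_sub hrk.le]
  congr 1
  · rw [hcast]; ring
  · apply Finset.sum_congr rfl
    intro n hn
    simp only [Finset.mem_Icc] at hn
    rw [Polynomial.coeff_C_mul, pow_two, coeff2_mul]
    simp only [Polynomial.coeff_iterate_derivative, coeff_Qp, nsmul_eq_mul]
    have hjj : n + k - r = n - (r - k) := by omega
    rw [hjj]
    simp only [T, bb, zero_add]
    ring

set_option maxHeartbeats 1000000 in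
lemma key (s : ℕ) : ∀ m : ℕ, 1 ≤ m →
    2 * EE m (m + 2*s) =
      ((2*s+2).factorial : ℝ)^2 * ((m:ℝ) + s) /
        (2^(2*m+4*s+1) * ((s+1).factorial : ℝ)^2 * ((m+s).factorial : ℝ)^2) := by
  induction s with
  | zero =>
    intro m hm
    obtain ⟨m', rfl⟩ : ∃ m', m = m'+1 := ⟨m-1, by omega⟩
    have h1 : (m'+1) - (m'+1) = 0 := by omega
    have h2 : (m'+1) - 1 = m' := by omega
    have g0 : gq m' 0 = (2^m' * m'.factorial : ℝ)⁻¹ := by simp [gq]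
    have g2 : gq m' 2 = -(m' * (2^m' * m'.factorial : ℝ)⁻¹) := by
      rw [gq]; norm_num [Nat.choose_one_right]
    have gA0 : gq (m'+1) 0 = (2^(m'+1) * (m'+1).factorial : ℝ)⁻¹ := by simp [gq]
    have gA1 : gq (m'+1) 1 = 0 := by simp [gq]
    have gA2 : gq (m'+1) 2 = -((m'+1) * (2^(m'+1) * (m'+1).factorial : ℝ)⁻¹) := by
      rw [gq]; norm_num [Nat.choose_one_right]; push_cast; ring
    simp only [EE, T, bb, h1, h2, Finset.Icc_self, Finset.sum_singleton,
      Nat.descFactorial_zero, Nat.add_zero, Nat.zero_add, Nat.cast_one, one_mul,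
      g0, g2, gA0, gA1, gA2]
    have hf : ((m').factorial : ℝ) ≠ 0 := Nat.cast_ne_zero.mpr (Nat.factorial_ne_zero _)
    have hp : ((2:ℝ))^m' ≠ 0 := by positivity
    have hm0 : (0:ℝ) ≤ m' := Nat.cast_nonneg m'
    rw [show (2*(2*((m'+1 : ℕ):ℝ)-1)) = 4*(m':ℝ)+2 by push_cast; ring]
    have hden' : (4*(m':ℝ)+2) ≠ 0 := by positivity
    rw [Nat.factorial_succ]
    push_cast [pow_succ]
    field_simp [hden']
    ring
  | succ s ih =>
    intro m hm
    have hsplit : EE m (m + 2*(s+1)) = EE m (m + 2*s) - T m (m+2*s+1) - T m (m+2*s+2) := by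
      simp only [EE]
      rw [show m+2*(s+1) = (m+2*s+1)+1 by ring, Finset.sum_Icc_succ_top (by omega),
        show m+2*s+1 = (m+2*s)+1 by ring, Finset.sum_Icc_succ_top (by omega)]
      ring
    rw [hsplit, mul_sub, mul_sub, ih m hm]
    have hsub1 : m+2*s+1 - m = 2*s+1 := by omega
    have hsub2 : m+2*s+2 - m = 2*s+2 := by omega
    have hb10 : bb m (m+2*s+1) 0 = 0 := by
      simp only [bb, hsub1, zero_add]; rw [gq, if_neg (by omega)]; ring
    have hb12 : bb m (m+2*s+1) 2 = 0 := by
      simp only [bb, hsub1]; rw [show 2+(2*s+1) = 2*s+3 by ring, gq, if_neg (by omega)]; ring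
    have hdf1 : (2*s+2).descFactorial (2*s+1) = (2*s+2).factorial := by
      rw [show 2*s+2 = (2*s+1)+1 by ring, Nat.descFactorial_eq_factorial_mul_choose,
        Nat.choose_succ_self_right, Nat.factorial_succ]
      exact mul_comm _ _
    have hb11 : bb m (m+2*s+1) 1 = ((2*s+2).factorial:ℝ) *
        ((-1)^(s+1) * (((m+2*s+1).choose (s+1)):ℝ) * (2^(m+2*s+1) * ((m+2*s+1).factorial:ℝ))⁻¹) := by
      simp only [bb, hsub1]
      rw [show 1+(2*s+1) = 2*s+2 by ring, gq, if_pos (by omega), show (2*s+2)/2 = s+1 by omega, hdf1]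
    have hb21 : bb m (m+2*s+2) 1 = 0 := by
      simp only [bb, hsub2]; rw [show 1+(2*s+2) = 2*s+3 by ring, gq, if_neg (by omega)]; ring
    have hb20 : bb m (m+2*s+2) 0 = ((2*s+2).factorial:ℝ) *
        ((-1)^(s+1) * (((m+2*s+2).choose (s+1)):ℝ) * (2^(m+2*s+2) * ((m+2*s+2).factorial:ℝ))⁻¹) := by
      simp only [bb, hsub2, zero_add]
      rw [gq, if_pos (by omega), show (2*s+2)/2 = s+1 by omega, Nat.descFactorial_self]
    have hch : (2*s+4).choose (2*s+2) = (s+2)*(2*s+3) := by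
      rw [show 2*s+2 = (2*s+4) - 2 by omega, Nat.choose_symm (by omega), Nat.choose_two_right]
      have h : (2*s+4)*(2*s+4-1) = ((s+2)*(2*s+3))*2 := by
        rw [show 2*s+4-1 = 2*s+3 by omega]; ring
      omega
    have hdf2 : (2*s+4).descFactorial (2*s+2) = (s+2)*(2*s+3)*(2*s+2).factorial := by
      rw [Nat.descFactorial_eq_factorial_mul_choose, hch]; ring
    have hb22 : bb m (m+2*s+2) 2 = (((s+2):ℝ)*(2*(s:ℝ)+3)*((2*s+2).factorial:ℝ)) *
        (-((-1:ℝ)^(s+1)) * (((m+2*s+2).choose (s+2)):ℝ) * (2^(m+2*s+2) * ((m+2*s+2).factorial:ℝ))⁻¹) := by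
      simp only [bb, hsub2]
      rw [show 2+(2*s+2) = 2*s+4 by ring, gq, if_pos (by omega), show (2*s+4)/2 = s+2 by omega, hdf2,
        show ((-1:ℝ))^(s+2) = -(-1:ℝ)^(s+1) by rw [pow_succ, pow_succ]; ring]
      push_cast
      ring
    have hc1 : (((m+2*s+1).choose (s+1)):ℝ) =
        ((m+2*s+1).factorial:ℝ)/(((s+1).factorial:ℝ)*((m+s).factorial:ℝ)) := by
      rw [Nat.cast_choose ℝ (by omega), show (m+2*s+1) - (s+1) = m+s by omega]
    have hc2 : (((m+2*s+2).choose (s+1)):ℝ) =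
        ((m+2*s+2).factorial:ℝ)/(((s+1).factorial:ℝ)*((m+s+1).factorial:ℝ)) := by
      rw [Nat.cast_choose ℝ (by omega), show (m+2*s+2) - (s+1) = m+s+1 by omega]
    have hc3 : (((m+2*s+2).choose (s+2)):ℝ) =
        ((m+2*s+2).factorial:ℝ)/(((s+2).factorial:ℝ)*((m+s).factorial:ℝ)) := by
      rw [Nat.cast_choose ℝ (by omega), show (m+2*s+2) - (s+2) = m+s by omega]
    simp only [T, hb10, hb11, hb12, hb20, hb21, hb22, hc1, hc2, hc3]
    rw [show 2*(s+1)+2 = (2*s+3)+1 by ring, show m+(s+1) = (m+s)+1 by ring,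
      show (s+1)+1 = (s+1)+1 from rfl]
    rw [Nat.factorial_succ (2*s+3), show 2*s+3 = (2*s+2)+1 by ring, Nat.factorial_succ (2*s+2),
      Nat.factorial_succ (m+s), show s+2 = (s+1)+1 by ring, Nat.factorial_succ (s+1),
      show m+2*s+2 = (m+2*s+1)+1 by ring, Nat.factorial_succ (m+2*s+1)]
    have f1 : ((s+1).factorial:ℝ) ≠ 0 := Nat.cast_ne_zero.mpr (Nat.factorial_ne_zero _)
    have f2 : ((m+s).factorial:ℝ) ≠ 0 := Nat.cast_ne_zero.mpr (Nat.factorial_ne_zero _)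
    have f3 : ((m+2*s+1).factorial:ℝ) ≠ 0 := Nat.cast_ne_zero.mpr (Nat.factorial_ne_zero _)
    have f4 : ((2*s+2).factorial:ℝ) ≠ 0 := Nat.cast_ne_zero.mpr (Nat.factorial_ne_zero _)
    have p1 : ((2:ℝ))^(m+2*s+1) ≠ 0 := by positivity
    have p2 : ((2:ℝ))^m ≠ 0 := by positivity
    have p3 : ((2:ℝ))^s ≠ 0 := by positivity
    have hms : ((m:ℝ)+(s:ℝ)+1) ≠ 0 := by positivity
    have hs1 : ((s:ℝ)+1+1) ≠ 0 := by positivity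
    push_cast
    rcases Nat.even_or_odd (s+1) with hpar | hpar
    · simp only [Even.neg_one_pow hpar]
      field_simp
      ring
    · simp only [Odd.neg_one_pow hpar]
      field_simp
      ring

theorem stmt3 (r k : ℕ) (hk : 1 ≤ k) (hodd : Odd k) (hrk : k < r) :
    iteratedDeriv 2 (A2 r k) 0 =
      ((k+1).factorial : ℝ)^2 * ((r:ℝ) - ((k+1)/2 : ℕ)) /
        (2^(2*r-1) * (((k+1)/2).factorial : ℝ)^2 * ((r - (k+1)/2).factorial : ℝ)^2) ∧
    0 < iteratedDeriv 2 (A2 r k) 0 := by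
  obtain ⟨s, rfl⟩ := hodd
  have hm : 1 ≤ r - (2*s+1) := by omega
  have h1 : iteratedDeriv 2 (A2 r (2*s+1)) 0 = 2 * EE (r-(2*s+1)) ((r-(2*s+1)) + 2*s) := by
    rw [iteratedDeriv2_A2, coeff2_PA _ _ (by omega) hrk, show r - 1 = (r-(2*s+1)) + 2*s by omega]
  have h2 := key s (r-(2*s+1)) hm
  rw [h1, h2]
  have e1 : (2*s+1+1)/2 = s+1 := by omega
  have e2 : r - (s+1) = (r-(2*s+1)) + s := by omega
  have e3 : 2*r-1 = 2*(r-(2*s+1))+4*s+1 := by omega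
  have e4 : 2*s+1+1 = 2*s+2 := by omega
  have e5 : ((r:ℝ) - ((s+1:ℕ):ℝ)) = ((r-(2*s+1) : ℕ):ℝ) + (s:ℝ) := by
    rw [Nat.cast_sub (by omega : 2*s+1 ≤ r)]
    push_cast
    ring
  constructor
  · rw [e1, e2, e3, e4, e5]
  · apply div_pos
    · have hmr : (0:ℝ) < ((r-(2*s+1):ℕ):ℝ) := by exact_mod_cast hm
      have : (0:ℝ) < (((2*s+2).factorial:ℕ):ℝ) := by exact_mod_cast (2*s+2).factorial_pos
      positivity
    · have : (0:ℝ) < (((s+1).factorial:ℕ):ℝ) := by exact_mod_cast (s+1).factorial_pos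
      positivity
end

section
/- For even k = 2ℓ with ℓ ≥ 1 and r > k, the second derivative at 0 of A_{r,k}^2(x) = Q_{r-k-1}(x)^2 (1-x^2)/(2(2r-2k-1)) - Σ_{n=r-k}^{r-1} Q_n^{(n+k-r)}(x)^2 (n+1/2) is strictly negative; more precisely, it equals -(2ℓ)!(2ℓ+2)!(r-ℓ) / (2^{2r-1} ℓ!(ℓ+1)!(r-ℓ)!(r-ℓ-1)!). -/
/-!
All functions involved are polynomials, so the second derivative of `A2` at `0` is twice its
`x²`-coefficient. The `x²`-coefficient of `(p⁽ᵐ⁾)²` only involves the coefficients of `p` in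
degrees `m`, `m + 1`, `m + 2`, and `Q n` only has the even coefficients `(-1)ʲ C(n, j) / (2ⁿ n!)`;
so for `r = t + 1 + k` each summand of `A2` is an explicit product of factorials. Passing from
`k = 2a` to `k = 2a + 2` subtracts the two summands `n = t + 1 + 2a` and `n = t + 2 + 2a`, which
carries the closed form for `ℓ = a` to the one for `ℓ = a + 1`; for `k = 0` only the first term of
`A2` is left.
-/

open Polynomial Finset
open scoped Nat

namespace Polynomial

section CommRing

variable {R : Type*} [CommRing R]

theorem coeff_two_sq (p : R[X]) : (p ^ 2).coeff 2 = 2 * p.coeff 0 * p.coeff 2 + p.coeff 1 ^ 2 := by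
  rw [sq, coeff_mul, Nat.sum_antidiagonal_eq_sum_range_succ_mk]
  simp only [sum_range_succ, sum_range_zero]
  ring

theorem factorial_mul_coeff_iterate_derivative (p : R[X]) (m j : ℕ) :
    (j ! : R) * (derivative^[m] p).coeff j = (j + m)! * p.coeff (j + m) := by
  have h := Nat.factorial_mul_descFactorial (Nat.le_add_left m j)
  rw [Nat.add_sub_cancel] at h
  rw [coeff_iterate_derivative, nsmul_eq_mul, ← mul_assoc, ← Nat.cast_mul, h]

theorem coeff_two_iterate_derivative_sq (p : R[X]) (m : ℕ) :
    ((derivative^[m] p) ^ 2).coeff 2 =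
      m ! * (m + 2)! * p.coeff m * p.coeff (m + 2) + ((m + 1)! * p.coeff (m + 1)) ^ 2 := by
  have h0 := factorial_mul_coeff_iterate_derivative p m 0
  have h1 := factorial_mul_coeff_iterate_derivative p m 1
  have h2 := factorial_mul_coeff_iterate_derivative p m 2
  simp only [Nat.factorial_zero, Nat.factorial_one, Nat.factorial_two, Nat.cast_one, Nat.cast_two,
    one_mul, zero_add, add_comm 1 m, add_comm 2 m] at h0 h1 h2
  rw [coeff_two_sq, h0, h1]
  linear_combination (m ! * p.coeff m : R) * h2

theorem coeff_one_sub_X_pow (n j : ℕ) : ((1 - X : R[X]) ^ n).coeff j = (-1) ^ j * n.choose j := by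
  have h : (1 - X : R[X]) ^ n = ((1 + X) ^ n).comp (C (-1) * X) := by
    simp [sub_eq_add_neg]
  rw [h, comp_C_mul_X_coeff, coeff_one_add_X_pow, mul_comm]

theorem one_sub_X_sq_pow (n : ℕ) : (1 - X ^ 2 : R[X]) ^ n = expand R 2 ((1 - X) ^ n) := by
  simp

end CommRing

variable {𝕜 : Type*} [NontriviallyNormedField 𝕜]

theorem iteratedDeriv_eval (p : 𝕜[X]) (m : ℕ) :
    iteratedDeriv m (fun x => p.eval x) = fun x => (derivative^[m] p).eval x := by
  induction m generalizing p with
  | zero => simp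
  | succ m ih =>
    rw [iteratedDeriv_succ', Function.iterate_succ_apply, ← ih]
    congr
    funext x
    exact p.deriv

theorem iteratedDeriv_eval_zero (p : 𝕜[X]) (m : ℕ) :
    iteratedDeriv m (fun x => p.eval x) 0 = m ! * p.coeff m := by
  simp only [iteratedDeriv_eval]
  rw [← coeff_zero_eq_eval_zero, coeff_iterate_derivative, zero_add,
    Nat.descFactorial_self, nsmul_eq_mul]

end Polynomial

noncomputable def QPoly (n : ℕ) : ℝ[X] := C ((2 : ℝ) ^ n * n !)⁻¹ * (1 - X ^ 2) ^ n

theorem Q_eq_eval (n : ℕ) : Q n = fun x => (QPoly n).eval x := by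
  funext x
  simp [Q, QPoly, div_eq_inv_mul]

theorem QPoly_coeff_two_mul (n j : ℕ) :
    (QPoly n).coeff (2 * j) = (-1) ^ j * n.choose j / (2 ^ n * n !) := by
  rw [QPoly, coeff_C_mul, one_sub_X_sq_pow, coeff_expand_mul' two_pos, coeff_one_sub_X_pow,
    inv_mul_eq_div]

theorem QPoly_coeff_two_mul_of_add_eq {n j i : ℕ} (h : j + i = n) :
    (QPoly n).coeff (2 * j) = (-1) ^ j / (2 ^ n * j ! * i !) := by
  subst h
  rw [QPoly_coeff_two_mul, Nat.cast_add_choose]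
  field_simp

theorem QPoly_coeff_two_mul_add_one (n j : ℕ) : (QPoly n).coeff (2 * j + 1) = 0 := by
  rw [QPoly, coeff_C_mul, one_sub_X_sq_pow, coeff_expand two_pos, if_neg (by omega), mul_zero]

theorem coeff_two_iterate_derivative_QPoly_sq_even {n a i : ℕ} (h : a + 1 + i = n) :
    ((derivative^[2 * a] (QPoly n)) ^ 2).coeff 2 =
      -((2 * a)! * (2 * a + 2)!) / ((2 ^ n) ^ 2 * a ! * (a + 1)! * (i + 1)! * i !) := by
  rw [coeff_two_iterate_derivative_sq, QPoly_coeff_two_mul_add_one,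
    QPoly_coeff_two_mul_of_add_eq (j := a) (i := i + 1) (by omega),
    show 2 * a + 2 = 2 * (a + 1) by ring, QPoly_coeff_two_mul_of_add_eq h, pow_succ,
    mul_neg_one]
  have hsq : ((-1 : ℝ) ^ a) ^ 2 = 1 := by rw [← pow_mul, pow_mul', neg_one_sq, one_pow]
  field_simp
  linear_combination (-((2 * a)! * (2 * a + 2)! : ℝ)) * hsq

theorem coeff_two_iterate_derivative_QPoly_sq_odd {n a i : ℕ} (h : a + 1 + i = n) :
    ((derivative^[2 * a + 1] (QPoly n)) ^ 2).coeff 2 =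
      ((2 * a + 2)! / (2 ^ n * (a + 1)! * i !)) ^ 2 := by
  rw [coeff_two_iterate_derivative_sq, show 2 * a + 1 + 2 = 2 * (a + 1) + 1 by ring,
    QPoly_coeff_two_mul_add_one, show 2 * a + 1 + 1 = 2 * (a + 1) by ring,
    QPoly_coeff_two_mul_of_add_eq h, mul_zero, zero_mul, zero_add, mul_div_assoc', div_pow,
    mul_pow, ← pow_mul, pow_mul', neg_one_sq, one_pow, mul_one, div_pow]

noncomputable def A2Poly (r k : ℕ) : ℝ[X] :=
  (QPoly (r - k - 1)) ^ 2 * (1 - X ^ 2) * C (2 * (2 * (r : ℝ) - 2 * k - 1))⁻¹ -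
    ∑ n ∈ Icc (r - k) (r - 1), (derivative^[n + k - r] (QPoly n)) ^ 2 * C ((n : ℝ) + 1 / 2)

theorem A2_eq_eval (r k : ℕ) : A2 r k = fun x => (A2Poly r k).eval x := by
  funext x
  simp [A2, A2Poly, Q_eq_eval, iteratedDeriv_eval, div_eq_mul_inv, eval_finsetSum]

theorem coeff_two_QPoly_sq_mul_one_sub_X_sq (t : ℕ) :
    ((QPoly t) ^ 2 * (1 - X ^ 2)).coeff 2 = -(2 * t + 1 : ℝ) / (2 ^ t * t !) ^ 2 := by
  have h0 : (QPoly t).coeff 0 = _ := QPoly_coeff_two_mul t 0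
  have h2 : (QPoly t).coeff 2 = _ := QPoly_coeff_two_mul t 1
  rw [mul_one_sub, coeff_sub, coeff_mul_X_pow', if_pos le_rfl, Nat.sub_self, coeff_two_sq,
    sq (QPoly t), mul_coeff_zero, QPoly_coeff_two_mul_add_one t 0, h0, h2, Nat.choose_zero_right,
    Nat.choose_one_right]
  field_simp
  ring

theorem iteratedDeriv_two_A2_zero (t k : ℕ) :
    iteratedDeriv 2 (A2 (t + 1 + k) k) 0 =
      -1 / (2 ^ t * t !) ^ 2 -
        ∑ n ∈ Icc (t + 1) (t + k),
          (2 * n + 1) * ((derivative^[n - (t + 1)] (QPoly n)) ^ 2).coeff 2 := by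
  rw [A2_eq_eval, iteratedDeriv_eval_zero, A2Poly, coeff_sub, coeff_mul_C, finsetSum_coeff,
    show t + 1 + k - k - 1 = t by omega, show t + 1 + k - k = t + 1 by omega,
    show t + 1 + k - 1 = t + k by omega, coeff_two_QPoly_sq_mul_one_sub_X_sq, mul_sub, mul_sum]
  congr 1
  · rw [show 2 * (2 * ((t + 1 + k : ℕ) : ℝ) - 2 * k - 1) = 2 * (2 * t + 1) by push_cast; ring]
    field_simp
    ring
  · refine sum_congr rfl fun n _ => ?_
    rw [coeff_mul_C, show n + k - (t + 1 + k) = n - (t + 1) by omega]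
    ring

theorem iteratedDeriv_two_A2_zero_succ (t k : ℕ) :
    iteratedDeriv 2 (A2 (t + 1 + (k + 1)) (k + 1)) 0 =
      iteratedDeriv 2 (A2 (t + 1 + k) k) 0 -
        (2 * (t + 1 + k : ℕ) + 1) * ((derivative^[k] (QPoly (t + 1 + k))) ^ 2).coeff 2 := by
  rw [iteratedDeriv_two_A2_zero, iteratedDeriv_two_A2_zero, ← add_assoc t k 1,
    sum_Icc_succ_top (by omega), show t + k + 1 - (t + 1) = k by omega, add_right_comm t k 1]
  ring

noncomputable def secondDerivA2ClosedForm (t ℓ : ℕ) : ℝ :=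
  -((2 * ℓ)! * (2 * ℓ + 2)! * (t + ℓ + 1 : ℝ)) /
    (2 ^ (2 * t + 4 * ℓ + 1) * ℓ ! * (ℓ + 1)! * (t + ℓ + 1)! * (t + ℓ)!)

theorem secondDerivA2ClosedForm_zero (t : ℕ) :
    secondDerivA2ClosedForm t 0 = -1 / (2 ^ t * t !) ^ 2 := by
  simp only [secondDerivA2ClosedForm, mul_zero, add_zero, zero_add, Nat.factorial_zero,
    Nat.factorial_one, Nat.factorial_two, Nat.cast_zero, Nat.factorial_succ t]
  push_cast
  field_simp
  ring

theorem secondDerivA2ClosedForm_succ (t a : ℕ) :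
    secondDerivA2ClosedForm t (a + 1) =
      secondDerivA2ClosedForm t a -
        (2 * (t + 1 + 2 * a) + 1) *
          (-((2 * a)! * (2 * a + 2)!) /
            ((2 ^ (t + 1 + 2 * a)) ^ 2 * a ! * (a + 1)! * (t + a + 1)! * (t + a)!)) -
        (2 * (t + 2 + 2 * a) + 1) *
          ((2 * a + 2)! / (2 ^ (t + 2 + 2 * a) * (a + 1)! * (t + a + 1)!)) ^ 2 := by
  rw [secondDerivA2ClosedForm, secondDerivA2ClosedForm,
    show 2 * (a + 1) + 2 = 2 * a + 2 + 1 + 1 by ring, show 2 * (a + 1) = 2 * a + 2 by ring,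
    show 2 * a + 2 = 2 * a + 1 + 1 by ring, show t + (a + 1) = t + a + 1 by ring]
  simp only [Nat.factorial_succ]
  push_cast
  field_simp
  ring

theorem iteratedDeriv_two_A2_zero_eq_secondDerivA2ClosedForm (t ℓ : ℕ) :
    iteratedDeriv 2 (A2 (t + 1 + 2 * ℓ) (2 * ℓ)) 0 = secondDerivA2ClosedForm t ℓ := by
  induction ℓ with
  | zero => simpa [secondDerivA2ClosedForm_zero] using iteratedDeriv_two_A2_zero t 0
  | succ a ih =>
    rw [show 2 * (a + 1) = 2 * a + 1 + 1 by ring, iteratedDeriv_two_A2_zero_succ,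
      iteratedDeriv_two_A2_zero_succ, ih,
      coeff_two_iterate_derivative_QPoly_sq_even (i := t + a) (by omega),
      coeff_two_iterate_derivative_QPoly_sq_odd (i := t + a + 1) (by omega),
      secondDerivA2ClosedForm_succ]
    push_cast
    ring

theorem secondDerivA2ClosedForm_neg (t ℓ : ℕ) : secondDerivA2ClosedForm t ℓ < 0 := by
  rw [secondDerivA2ClosedForm, neg_div, neg_lt_zero]
  positivity

theorem stmt4_general (r ℓ : ℕ) (hrk : 2*ℓ < r) :
    iteratedDeriv 2 (A2 r (2*ℓ)) 0 =
      -(((2*ℓ).factorial : ℝ) * ((2*ℓ+2).factorial : ℝ) * ((r:ℝ) - ℓ)) /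
        (2^(2*r-1) * (ℓ.factorial : ℝ) * ((ℓ+1).factorial : ℝ) *
          ((r-ℓ).factorial : ℝ) * ((r-ℓ-1).factorial : ℝ)) ∧
    iteratedDeriv 2 (A2 r (2*ℓ)) 0 < 0 := by
  obtain ⟨t, rfl⟩ : ∃ t, r = t + 1 + 2 * ℓ := ⟨r - 2 * ℓ - 1, by omega⟩
  rw [iteratedDeriv_two_A2_zero_eq_secondDerivA2ClosedForm]
  refine ⟨?_, secondDerivA2ClosedForm_neg t ℓ⟩
  rw [secondDerivA2ClosedForm, show t + 1 + 2 * ℓ - ℓ = t + ℓ + 1 by omega,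
    show t + ℓ + 1 - 1 = t + ℓ by omega,
    show 2 * (t + 1 + 2 * ℓ) - 1 = 2 * t + 4 * ℓ + 1 by omega]
  push_cast
  ring

theorem stmt4 (r ℓ : ℕ) (hℓ : 1 ≤ ℓ) (hrk : 2*ℓ < r) :
    iteratedDeriv 2 (A2 r (2*ℓ)) 0 =
      -(((2*ℓ).factorial : ℝ) * ((2*ℓ+2).factorial : ℝ) * ((r:ℝ) - ℓ)) /
        (2^(2*r-1) * (ℓ.factorial : ℝ) * ((ℓ+1).factorial : ℝ) *
          ((r-ℓ).factorial : ℝ) * ((r-ℓ-1).factorial : ℝ)) ∧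
    iteratedDeriv 2 (A2 r (2*ℓ)) 0 < 0 :=
  stmt4_general r ℓ hrk
end
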